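/- arXiv:2005.03942 — 2 statements merged into one kernel-verified Lean document; each statement's English description precedes it below -/
import Mathlib

section
/- For permutation groups A on Ω₁ and B on Ω₂, the height of the product action of A × B on Ω₁ × Ω₂ satisfies H(A × B, Ω₁ × Ω₂) ≤ H(A, Ω₁) + H(B, Ω₂). -/
/-!
If `Λ ⊆ Ω₁ × Ω₂` is independent for `A × B`, its pointwise stabilizer is the product of the
pointwise stabilizers of its two projections. Each projection contains an independent subset
`Δᵢ` with the same stabilizer; lifting every point of `Δ₁` and of `Δ₂` back to a point of `Λ`
gives a subset of `Λ` with at most `|Δ₁| + |Δ₂|` points and the same stabilizer as `Λ`, which by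
independence is all of `Λ`.
-/

/-- The pointwise stabilizer of a set `Λ` in a group `G` acting on `Ω`. -/
def ptStab (G : Type*) [Group G] {Ω : Type*} [MulAction G Ω] (Λ : Set Ω) : Subgroup G :=
  ⨅ ω ∈ Λ, MulAction.stabilizer G ω

/-- `Λ` is an independent set: its pointwise stabilizer differs from that of
every proper subset. -/
def IsIndep (G : Type*) [Group G] {Ω : Type*} [MulAction G Ω] (Λ : Set Ω) : Prop :=
  ∀ Δ : Set Ω, Δ ⊂ Λ → ptStab G Δ ≠ ptStab G Λ

/-- The height of `G` on `Ω`: the maximum size of an independent set. -/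
noncomputable def height (G : Type*) [Group G] (Ω : Type*) [MulAction G Ω] : ℕ :=
  sSup {k | ∃ Λ : Set Ω, IsIndep G Λ ∧ Λ.ncard = k}

section ProductAction

variable {A B Ω₁ Ω₂ : Type*}

/-- The coordinatewise action of `A × B` on `Ω₁ × Ω₂`. -/
instance prodSMul [SMul A Ω₁] [SMul B Ω₂] : SMul (A × B) (Ω₁ × Ω₂) :=
  ⟨fun g p => (g.1 • p.1, g.2 • p.2)⟩

instance prodMulAction [Monoid A] [Monoid B] [MulAction A Ω₁] [MulAction B Ω₂] :
    MulAction (A × B) (Ω₁ × Ω₂) where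
  one_smul p := by
    show ((1 : A) • p.1, (1 : B) • p.2) = p
    simp
  mul_smul g h p := by
    show ((g.1 * h.1) • p.1, (g.2 * h.2) • p.2)
        = ((g.1 • h.1 • p.1), (g.2 • h.2 • p.2))
    simp [mul_smul]

end ProductAction

section PointwiseStabilizer

variable {G Ω : Type*} [Group G] [MulAction G Ω]

lemma mem_ptStab {Λ : Set Ω} {g : G} : g ∈ ptStab G Λ ↔ ∀ ω ∈ Λ, g • ω = ω := by
  simp [ptStab, Subgroup.mem_iInf, MulAction.mem_stabilizer_iff]

lemma ptStab_antitone : Antitone (ptStab G : Set Ω → Subgroup G) :=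
  fun _ _ hΔΛ _ hg => mem_ptStab.2 fun ω hω => mem_ptStab.1 hg ω (hΔΛ hω)

lemma IsIndep.eq_of_subset_of_ptStab_le {Λ Γ : Set Ω} (hΛ : IsIndep G Λ) (hΓΛ : Γ ⊆ Λ)
    (hle : ptStab G Γ ≤ ptStab G Λ) : Γ = Λ := by
  by_contra hne
  exact hΛ Γ (hΓΛ.ssubset_of_ne hne) (le_antisymm hle (ptStab_antitone hΓΛ))

/-- A minimal subset of `Λ` with the same pointwise stabilizer is independent. -/
lemma exists_isIndep_subset_ptStab_eq [Finite Ω] (Λ : Set Ω) :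
    ∃ Δ ⊆ Λ, IsIndep G Δ ∧ ptStab G Δ = ptStab G Λ := by
  obtain ⟨Δ, hΔΛ, hmin⟩ := exists_minimal_le_of_wellFoundedLT
    (fun Δ : Set Ω => ptStab G Δ = ptStab G Λ) Λ rfl
  refine ⟨Δ, hΔΛ, fun Δ' hΔ'Δ heq => ?_, hmin.prop⟩
  exact hΔ'Δ.not_subset (hmin.le_of_le (heq.trans hmin.prop) hΔ'Δ.subset)

lemma ncard_le_height [Finite Ω] {Λ : Set Ω} (hΛ : IsIndep G Λ) : Λ.ncard ≤ height G Ω :=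
  le_csSup ⟨Nat.card Ω, by rintro _ ⟨Γ, -, rfl⟩; exact Set.ncard_le_card Γ⟩ ⟨Λ, hΛ, rfl⟩

end PointwiseStabilizer

lemma ptStab_prod {A B Ω₁ Ω₂ : Type*} [Group A] [Group B] [MulAction A Ω₁] [MulAction B Ω₂]
    (Λ : Set (Ω₁ × Ω₂)) :
    ptStab (A × B) Λ = (ptStab A (Prod.fst '' Λ)).prod (ptStab B (Prod.snd '' Λ)) := by
  ext g
  simp only [Subgroup.mem_prod, mem_ptStab, Set.forall_mem_image, ← forall_and]
  exact forall₂_congr fun _ _ => Prod.ext_iff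

lemma exists_subset_image_eq_ncard_eq {α β : Type*} {f : α → β} {Λ : Set α} {Δ : Set β}
    (hΔ : Δ ⊆ f '' Λ) : ∃ Γ ⊆ Λ, f '' Γ = Δ ∧ Γ.ncard = Δ.ncard := by
  obtain ⟨Γ, hΓ, hbij⟩ := Set.exists_subset_bijOn (Λ ∩ f ⁻¹' Δ) f
  rw [Set.image_inter_preimage, Set.inter_eq_right.2 hΔ] at hbij
  exact ⟨Γ, hΓ.trans Set.inter_subset_left, hbij.image_eq, hbij.ncard_eq⟩

theorem height_prod_le_general {A B Ω₁ Ω₂ : Type*} [Group A] [Group B]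
    [Finite Ω₁] [Finite Ω₂] [MulAction A Ω₁] [MulAction B Ω₂] :
    height (A × B) (Ω₁ × Ω₂) ≤ height A Ω₁ + height B Ω₂ := by
  apply csSup_le'
  rintro _ ⟨Λ, hΛ, rfl⟩
  obtain ⟨Δ₁, hΔ₁Λ, hΔ₁, hstab₁⟩ := exists_isIndep_subset_ptStab_eq (G := A) (Prod.fst '' Λ)
  obtain ⟨Δ₂, hΔ₂Λ, hΔ₂, hstab₂⟩ := exists_isIndep_subset_ptStab_eq (G := B) (Prod.snd '' Λ)
  obtain ⟨Γ₁, hΓ₁Λ, hΓ₁, hcard₁⟩ := exists_subset_image_eq_ncard_eq hΔ₁Λ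
  obtain ⟨Γ₂, hΓ₂Λ, hΓ₂, hcard₂⟩ := exists_subset_image_eq_ncard_eq hΔ₂Λ
  have hΓΛ : Γ₁ ∪ Γ₂ = Λ := by
    refine hΛ.eq_of_subset_of_ptStab_le (Set.union_subset hΓ₁Λ hΓ₂Λ) ?_
    rw [ptStab_prod, ptStab_prod, ← hstab₁, ← hstab₂, ← hΓ₁, ← hΓ₂]
    exact Subgroup.prod_mono (ptStab_antitone (Set.image_mono Set.subset_union_left))
      (ptStab_antitone (Set.image_mono Set.subset_union_right))
  calc Λ.ncard = (Γ₁ ∪ Γ₂).ncard := by rw [hΓΛ]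
    _ ≤ Γ₁.ncard + Γ₂.ncard := Set.ncard_union_le _ _
    _ = Δ₁.ncard + Δ₂.ncard := by rw [hcard₁, hcard₂]
    _ ≤ height A Ω₁ + height B Ω₂ := add_le_add (ncard_le_height hΔ₁) (ncard_le_height hΔ₂)

/-- `H(A × B, Ω₁ × Ω₂) ≤ H(A, Ω₁) + H(B, Ω₂)`. -/
theorem height_prod_le {A B Ω₁ Ω₂ : Type*} [Group A] [Group B]
    [Finite Ω₁] [Finite Ω₂] [MulAction A Ω₁] [MulAction B Ω₂]
    [FaithfulSMul A Ω₁] [FaithfulSMul B Ω₂] :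
    height (A × B) (Ω₁ × Ω₂) ≤ height A Ω₁ + height B Ω₂ :=
  height_prod_le_general
end

section
/- If a permutation group G on a finite set Ω of size t contains a regular normal subgroup, then every irredundant base of G has length at most log₂ t + 1, i.e. I(G) ≤ log₂ t + 1. -/
/-- The pointwise stabilizer of the first `i` points of the tuple `b`. -/
def prefixStab (G : Type*) [Group G] {Ω : Type*} [MulAction G Ω] {k : ℕ}
    (b : Fin k → Ω) (i : ℕ) : Subgroup G :=
  ⨅ j : Fin k, ⨅ _ : (j : ℕ) < i, MulAction.stabilizer G (b j)

/-- `b` is an irredundant base: the chain of pointwise stabilizers of initial segments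
is strictly decreasing and terminates at the trivial group. -/
def IsIrredBase (G : Type*) [Group G] {Ω : Type*} [MulAction G Ω] {k : ℕ}
    (b : Fin k → Ω) : Prop :=
  (∀ i : Fin k, prefixStab G b ((i : ℕ) + 1) < prefixStab G b (i : ℕ)) ∧
    prefixStab G b k = ⊥

/-- `I(G, Ω)`: the maximum length of an irredundant base. -/
noncomputable def maxIrr (G : Type*) [Group G] (Ω : Type*) [MulAction G Ω] : ℕ :=
  sSup {k | ∃ b : Fin k → Ω, IsIrredBase G b}

/-!
Let `N` be a regular normal subgroup and `[ω₀, …, ω_{k-1}]` an irredundant base. If `g` fixes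
`ω₀` and `n ∈ N`, then `g` commutes with `n` iff `g` fixes `n • ω₀`: conjugation by `g` preserves
`N`, and an element of `N` is determined by the image of `ω₀`. Choosing `nᵢ ∈ N` with
`nᵢ • ω₀ = ωᵢ`, irredundance at step `i` says that `nᵢ` centralizes `G_{ω₀,…,ωᵢ}` but not
`G_{ω₀,…,ω_{i-1}}`. So the groups `N ∩ C_G(G_{ω₀,…,ω_{i-1}})`, `1 ≤ i ≤ k`, form a strictly
increasing chain of `k - 1` steps inside `N`, whence `2 ^ (k - 1) ≤ |N| = |Ω|`.
-/

namespace Subgroup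

variable {G : Type*} [Group G] [Finite G]

theorem two_mul_card_le_card_of_lt {H K : Subgroup G} (h : H < K) :
    2 * Nat.card H ≤ Nat.card K := by
  obtain ⟨m, hm⟩ := card_dvd_of_le h.le
  have hm0 : m ≠ 0 := by
    rintro rfl
    exact Nat.card_pos.ne' (by simpa using hm)
  have hm1 : m ≠ 1 := by
    rintro rfl
    exact h.ne (eq_of_le_of_card_ge h.le (by simp [hm]))
  rw [hm, mul_comm]
  exact Nat.mul_le_mul_left _ (by omega)

theorem two_pow_le_card_of_lt_succ (H : ℕ → Subgroup G) (m : ℕ)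
    (h : ∀ i < m, H i < H (i + 1)) : 2 ^ m ≤ Nat.card (H m) := by
  induction m with
  | zero => exact Nat.card_pos
  | succ m ih =>
    calc 2 ^ (m + 1) = 2 * 2 ^ m := by ring
      _ ≤ 2 * Nat.card (H m) := by gcongr; exact ih fun i hi ↦ h i (by omega)
      _ ≤ Nat.card (H (m + 1)) := two_mul_card_le_card_of_lt (h m m.lt_succ_self)

end Subgroup

theorem MulAction.card_eq_of_isPretransitive_of_isCancelSMul {H Ω : Type*} [Group H]
    [MulAction H Ω] [MulAction.IsPretransitive H Ω] [IsCancelSMul H Ω] (ω : Ω) :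
    Nat.card H = Nat.card Ω :=
  Nat.card_eq_of_bijective (fun h : H ↦ h • ω)
    ⟨fun _ _ h ↦ IsCancelSMul.right_cancel _ _ ω h, MulAction.surjective_smul H ω⟩

section PrefixStab

variable {G Ω : Type*} [Group G] [MulAction G Ω] {k : ℕ} {b : Fin k → Ω}

theorem mem_prefixStab {g : G} {i : ℕ} :
    g ∈ prefixStab G b i ↔ ∀ j : Fin k, (j : ℕ) < i → g • b j = b j := by
  simp [prefixStab, MulAction.mem_stabilizer_iff]

theorem prefixStab_antitone : Antitone (prefixStab G b) :=
  fun _ _ hij _ hg ↦ mem_prefixStab.2 fun j hj ↦ mem_prefixStab.1 hg j (hj.trans_le hij)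

theorem prefixStab_succ (i : Fin k) :
    prefixStab G b (i + 1) = prefixStab G b i ⊓ MulAction.stabilizer G (b i) := by
  ext g
  simp only [Subgroup.mem_inf, mem_prefixStab, MulAction.mem_stabilizer_iff,
    Nat.lt_succ_iff_lt_or_eq, or_imp, forall_and, Fin.val_inj, forall_eq]

end PrefixStab

section RegularNormal

variable {G Ω : Type*} [Group G] [MulAction G Ω] {N : Subgroup G} [N.Normal] [IsCancelSMul N Ω]

theorem commute_iff_smul_smul_eq {ω : Ω} {g n : G} (hg : g • ω = ω) (hn : n ∈ N) :
    Commute g n ↔ g • n • ω = n • ω := by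
  have hconj : g * n * g⁻¹ ∈ N := ‹N.Normal›.conj_mem n hn g
  have hconj_smul : (g * n * g⁻¹) • ω = g • n • ω := by
    rw [mul_smul, mul_smul, inv_smul_eq_iff.2 hg.symm]
  constructor
  · intro hcomm
    rw [← hconj_smul, hcomm.eq, mul_inv_cancel_right]
  · intro h
    have : (⟨g * n * g⁻¹, hconj⟩ : N) = ⟨n, hn⟩ :=
      IsCancelSMul.right_cancel _ _ ω (by simpa [Subgroup.smul_def, hconj_smul] using h)
    exact mul_inv_eq_iff_eq_mul.1 (congrArg Subtype.val this)

variable [MulAction.IsPretransitive N Ω] {k : ℕ} {b : Fin k → Ω}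

theorem inf_centralizer_prefixStab_lt_succ
    (hb : ∀ i : Fin k, prefixStab G b (i + 1) < prefixStab G b i) (i : Fin k) (hi : 0 < (i : ℕ)) :
    N ⊓ Subgroup.centralizer (prefixStab G b i) <
      N ⊓ Subgroup.centralizer (prefixStab G b (i + 1)) := by
  set ω := b ⟨0, i.pos⟩
  have fix_ω {j : ℕ} (hj : 0 < j) {g : G} (hg : g ∈ prefixStab G b j) : g • ω = ω :=
    mem_prefixStab.1 hg _ hj
  obtain ⟨⟨n, hnN⟩, hn⟩ := MulAction.exists_smul_eq N ω (b i)
  rw [Subgroup.smul_def] at hn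
  have hn_mem : n ∈ Subgroup.centralizer (prefixStab G b (i + 1)) := by
    refine Subgroup.mem_centralizer_iff.2 fun g hg ↦ ?_
    refine ((commute_iff_smul_smul_eq (fix_ω i.val.succ_pos hg) hnN).2 ?_).eq
    rw [hn]
    exact mem_prefixStab.1 hg i i.val.lt_succ_self
  have hn_not_mem : n ∉ Subgroup.centralizer (prefixStab G b i) := by
    intro hn_cent
    have hstrict := hb i
    rw [prefixStab_succ, inf_lt_left, SetLike.not_le_iff_exists] at hstrict
    obtain ⟨g, hg, hgb⟩ := hstrict
    have hcomm : Commute g n := Subgroup.mem_centralizer_iff.1 hn_cent g hg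
    rw [commute_iff_smul_smul_eq (fix_ω hi hg) hnN, hn] at hcomm
    exact hgb hcomm
  exact SetLike.lt_iff_le_and_exists.2
    ⟨inf_le_inf_left _ (Subgroup.centralizer_le (prefixStab_antitone i.val.le_succ)),
      n, Subgroup.mem_inf.2 ⟨hnN, hn_mem⟩, fun h ↦ hn_not_mem (Subgroup.mem_inf.1 h).2⟩

end RegularNormal

theorem le_log_two_card_add_one_of_prefixStab_lt {G Ω : Type*} [Group G] [Finite G]
    [MulAction G Ω] (N : Subgroup G) [N.Normal] [MulAction.IsPretransitive N Ω]
    [IsCancelSMul N Ω] {k : ℕ} {b : Fin k → Ω}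
    (hb : ∀ i : Fin k, prefixStab G b (i + 1) < prefixStab G b i) :
    k ≤ Nat.log 2 (Nat.card Ω) + 1 := by
  obtain _ | m := k
  · exact Nat.zero_le _
  let C : ℕ → Subgroup G := fun i ↦ N ⊓ Subgroup.centralizer (prefixStab G b (i + 1))
  have hchain : 2 ^ m ≤ Nat.card (C m) := Subgroup.two_pow_le_card_of_lt_succ C m
    fun i hi ↦ inf_centralizer_prefixStab_lt_succ hb ⟨i + 1, by omega⟩ i.succ_pos
  have hC : Nat.card (C m) ≤ Nat.card Ω :=
    MulAction.card_eq_of_isPretransitive_of_isCancelSMul (H := N) (b 0) ▸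
      Subgroup.card_le_of_le inf_le_left
  exact Nat.succ_le_succ (Nat.le_log_of_pow_le one_lt_two (hchain.trans hC))

theorem maxIrr_le_of_regular_normal_general {G Ω : Type*} [Group G] [Finite G]
    [MulAction G Ω]
    (N : Subgroup G) [N.Normal] [MulAction.IsPretransitive N Ω]
    (hreg : ∀ ω : Ω, MulAction.stabilizer N ω = ⊥) :
    (maxIrr G Ω : ℝ) ≤ Real.logb 2 (Nat.card Ω) + 1 := by
  have : IsCancelSMul N Ω := isCancelSMul_iff_stabilizer_eq_bot.2 hreg
  have hle : maxIrr G Ω ≤ Nat.log 2 (Nat.card Ω) + 1 :=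
    csSup_le' fun _ ⟨_, hb⟩ ↦ le_log_two_card_add_one_of_prefixStab_lt N hb.1
  calc (maxIrr G Ω : ℝ) ≤ (Nat.log 2 (Nat.card Ω) : ℝ) + 1 := by exact_mod_cast hle
    _ ≤ Real.logb 2 (Nat.card Ω) + 1 := by
      gcongr
      exact_mod_cast Real.natLog_le_logb (Nat.card Ω) 2

/-- If `G` has a regular normal subgroup `N` (transitive with trivial point stabilizers),
then `I(G) ≤ log₂ t + 1` where `t = |Ω|`. -/
theorem maxIrr_le_of_regular_normal {G Ω : Type*} [Group G] [Finite G] [Finite Ω]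
    [MulAction G Ω] [FaithfulSMul G Ω] [MulAction.IsPretransitive G Ω]
    (N : Subgroup G) [N.Normal] [MulAction.IsPretransitive N Ω]
    (hreg : ∀ ω : Ω, MulAction.stabilizer N ω = ⊥) :
    (maxIrr G Ω : ℝ) ≤ Real.logb 2 (Nat.card Ω) + 1 :=
  maxIrr_le_of_regular_normal_general N hreg
end
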